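/- Let P be the path [0, -1, 1, 5, 2, 3, 6, 4, 8] in Cay(ℤ, ±{1,2,3,4}) and let H₁ = ⋃_{i∈ℤ} (P + 8i). Then {H₁, H₁+2, H₁+4, H₁+6} is a decomposition of Cay(ℤ, ±{1,2,3,4}) into 4 edge-disjoint two-way-infinite Hamilton paths. -/

import Mathlib

/-- Infinite circulant graph on ℤ: `u ~ v` iff `u - v ∈ S` or `v - u ∈ S`. -/
def cay (S : Set ℤ) : SimpleGraph ℤ where
  Adj u v := u ≠ v ∧ (u - v ∈ S ∨ v - u ∈ S)
  symm := by
    constructor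
    intro u v h
    exact ⟨h.1.symm, h.2.symm⟩
  loopless := by
    constructor
    intro v h
    exact h.1 rfl

/-- `H` is a two-way-infinite Hamilton path of `G`: a connected spanning subgraph
in which every vertex has degree 2. -/
def IsHamPath (G H : SimpleGraph ℤ) : Prop :=
  H ≤ G ∧ H.Connected ∧ ∀ v : ℤ, (H.neighborSet v).ncard = 2

/-- `G` decomposes into `k` edge-disjoint two-way-infinite Hamilton paths. -/
def HamDecomp (G : SimpleGraph ℤ) (k : ℕ) : Prop :=
  ∃ D : Fin k → SimpleGraph ℤ,
    (∀ i, IsHamPath G (D i)) ∧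
    (∀ i j, i ≠ j → Disjoint (D i).edgeSet (D j).edgeSet) ∧
    ∀ e ∈ G.edgeSet, ∃ i, e ∈ (D i).edgeSet

/-- Translate of a graph on ℤ by `t`. -/
def shiftGraph (H : SimpleGraph ℤ) (t : ℤ) : SimpleGraph ℤ where
  Adj u v := H.Adj (u - t) (v - t)
  symm := ⟨fun _ _ h => H.adj_symm h⟩
  loopless := ⟨fun _ h => H.irrefl h⟩

/-- The path graph determined by a list of vertices. -/
def listGraph (l : List ℤ) : SimpleGraph ℤ :=
  SimpleGraph.fromEdgeSet {e | ∃ i : ℕ, i + 1 < l.length ∧ e = s(l.getD i 0, l.getD (i+1) 0)}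

/-!
Reading off the vertices of `H₁` in path order gives the map `n ↦ 8⌊n/8⌋ + P_{n mod 8}`, which
is a bijection of `ℤ` because the first eight vertices `0, -1, 1, 5, 2, 3, 6, 4` of `P` are
pairwise incongruent mod 8. Hence `H₁` and its translates are images of the standard path on `ℤ`
under bijections, so they are two-way-infinite Hamilton paths. Moreover `{u, u + d}` is an edge of
`H₁` exactly when `u mod 8` lies in `R_d`, where `R_1 = {2, 7}`, `R_2 = {4, 7}`, `R_3 = {2, 3}`,
`R_4 = {1, 4}`. Each `R_d` has one even and one odd residue, so its translates by `0, 2, 4, 6`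
partition `ℤ/8`: every edge of the Cayley graph lies in exactly one of the four translates of `H₁`.
-/

open SimpleGraph

theorem hasse_int_neighborSet (n : ℤ) : (hasse ℤ).neighborSet n = {n + 1, n - 1} := by
  ext m
  simp only [mem_neighborSet, hasse_adj, Order.covBy_iff_add_one_eq, Set.mem_insert_iff,
    Set.mem_singleton_iff]
  omega

theorem hasse_int_connected : (hasse ℤ).Connected :=
  ⟨hasse_preconnected_of_succ ℤ⟩

theorem isHamPath_map_hasse {G : SimpleGraph ℤ} (e : ℤ ≃ ℤ) (hG : (hasse ℤ).map e ≤ G) :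
    IsHamPath G ((hasse ℤ).map e) := by
  refine ⟨hG, hasse_int_connected.map (Iso.map e _).toHom e.surjective, fun v => ?_⟩
  obtain ⟨n, rfl⟩ := e.surjective v
  rw [← e.coe_toEmbedding, neighborSet_map,
    Set.ncard_image_of_injective _ e.toEmbedding.injective, hasse_int_neighborSet,
    Set.ncard_pair (by omega)]

theorem shiftGraph_map (G : SimpleGraph ℤ) (e : ℤ ≃ ℤ) (t : ℤ) :
    shiftGraph (G.map e) t = G.map (e.trans (Equiv.addRight t)) := by
  ext u v
  simp only [shiftGraph, map_adj', Equiv.trans_apply, Equiv.coe_addRight]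
  constructor <;> rintro ⟨hne, a, b, hab, ha, hb⟩ <;>
    exact ⟨by omega, a, b, hab, by omega, by omega⟩

abbrev basePath : List ℤ := [0, -1, 1, 5, 2, 3, 6, 4, 8]

-- `pathVertex n` is the `n`-th vertex of `H₁`: steps `8q, …, 8q + 8` traverse `P + 8q`.
def pathVertex (n : ℤ) : ℤ := 8 * (n / 8) + basePath.getD (n % 8).toNat 0

def pathIndex (v : ℤ) : ℤ := 8 * (v / 8) + [0, 2, 4, 5, 7, 3, 6, 9].getD (v % 8).toNat 0

theorem pathVertex_cases (n : ℤ) :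
    (n % 8 = 0 ∧ pathVertex n = n) ∨ (n % 8 = 1 ∧ pathVertex n = n - 2) ∨
    (n % 8 = 2 ∧ pathVertex n = n - 1) ∨ (n % 8 = 3 ∧ pathVertex n = n + 2) ∨
    (n % 8 = 4 ∧ pathVertex n = n - 2) ∨ (n % 8 = 5 ∧ pathVertex n = n - 2) ∨
    (n % 8 = 6 ∧ pathVertex n = n) ∨ (n % 8 = 7 ∧ pathVertex n = n - 3) := by
  obtain ⟨i, hi, hn⟩ : ∃ i : ℕ, i < 8 ∧ n % 8 = i := ⟨(n % 8).toNat, by omega, by omega⟩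
  simp only [pathVertex, basePath, hn, Int.toNat_natCast]
  interval_cases i <;> simp <;> omega

theorem pathIndex_cases (v : ℤ) :
    (v % 8 = 0 ∧ pathIndex v = v) ∨ (v % 8 = 1 ∧ pathIndex v = v + 1) ∨
    (v % 8 = 2 ∧ pathIndex v = v + 2) ∨ (v % 8 = 3 ∧ pathIndex v = v + 2) ∨
    (v % 8 = 4 ∧ pathIndex v = v + 3) ∨ (v % 8 = 5 ∧ pathIndex v = v - 2) ∨
    (v % 8 = 6 ∧ pathIndex v = v) ∨ (v % 8 = 7 ∧ pathIndex v = v + 2) := by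
  obtain ⟨i, hi, hv⟩ : ∃ i : ℕ, i < 8 ∧ v % 8 = i := ⟨(v % 8).toNat, by omega, by omega⟩
  simp only [pathIndex, hv, Int.toNat_natCast]
  interval_cases i <;> simp <;> omega

@[simps]
def pathEquiv : ℤ ≃ ℤ where
  toFun := pathVertex
  invFun := pathIndex
  left_inv n := by
    have := pathVertex_cases n
    have := pathIndex_cases (pathVertex n)
    omega
  right_inv v := by
    have := pathIndex_cases v
    have := pathVertex_cases (pathIndex v)
    omega

theorem pathVertex_eight_mul_add (q : ℤ) (i : ℕ) (hi : i ≤ 8) :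
    pathVertex (8 * q + i) = 8 * q + basePath.getD i 0 := by
  have := pathVertex_cases (8 * q + i)
  interval_cases i <;> simp at this ⊢ <;> omega

theorem exists_pathVertex_eq_getD (n : ℤ) : ∃ k : ℤ, ∃ i : ℕ, i < 8 ∧
    pathVertex n = 8 * k + basePath.getD i 0 ∧
    pathVertex (n + 1) = 8 * k + basePath.getD (i + 1) 0 := by
  obtain ⟨k, i, hi, rfl⟩ : ∃ k : ℤ, ∃ i : ℕ, i < 8 ∧ n = 8 * k + i :=
    ⟨n / 8, (n % 8).toNat, by omega, by omega⟩
  have h := pathVertex_eight_mul_add k (i + 1) (by omega)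
  push_cast at h
  exact ⟨k, i, hi, pathVertex_eight_mul_add k i hi.le, by rw [add_assoc, h]⟩

theorem iSup_shiftGraph_listGraph :
    (⨆ k : ℤ, shiftGraph (listGraph basePath) (8 * k)) = (hasse ℤ).map pathEquiv := by
  ext u v
  simp only [iSup_adj, shiftGraph, listGraph, fromEdgeSet_adj, map_adj', hasse_adj,
    Order.covBy_iff_add_one_eq, pathEquiv_apply, Set.mem_ofPred_eq, List.length_cons,
    List.length_nil]
  constructor
  · rintro ⟨k, ⟨i, hi, he⟩, hne⟩
    have h₁ := pathVertex_eight_mul_add k i (by omega)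
    have h₂ := pathVertex_eight_mul_add k (i + 1) (by omega)
    push_cast at h₂
    refine ⟨by omega, ?_⟩
    rcases Sym2.eq_iff.mp he with ⟨hu, hv⟩ | ⟨hu, hv⟩
    · exact ⟨8 * k + i, 8 * k + (i + 1), Or.inl (add_assoc ..), by omega, by omega⟩
    · exact ⟨8 * k + (i + 1), 8 * k + i, Or.inr (add_assoc ..), by omega, by omega⟩
  · rintro ⟨hne, a, b, rfl | rfl, rfl, rfl⟩
    · obtain ⟨k, i, hi, h₁, h₂⟩ := exists_pathVertex_eq_getD a
      exact ⟨k, ⟨i, by omega, by rw [h₁, h₂]; simp⟩, by omega⟩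
    · obtain ⟨k, i, hi, h₁, h₂⟩ := exists_pathVertex_eq_getD b
      exact ⟨k, ⟨i, by omega, by rw [Sym2.eq_swap, h₁, h₂]; simp⟩, by omega⟩

-- `{u, v}` is an edge of `H₁` with `u < v`, i.e. `v - u = d` and `u % 8 ∈ R_d`.
def IsForwardEdge (u v : ℤ) : Prop :=
  (v - u = 1 ∧ (u % 8 = 2 ∨ u % 8 = 7)) ∨ (v - u = 2 ∧ (u % 8 = 4 ∨ u % 8 = 7)) ∨
  (v - u = 3 ∧ (u % 8 = 2 ∨ u % 8 = 3)) ∨ (v - u = 4 ∧ (u % 8 = 1 ∨ u % 8 = 4))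

def IsPathEdge (u v : ℤ) : Prop := IsForwardEdge u v ∨ IsForwardEdge v u

theorem IsPathEdge.symm {u v : ℤ} (h : IsPathEdge u v) : IsPathEdge v u := Or.symm h

theorem isPathEdge_pathVertex (n : ℤ) : IsPathEdge (pathVertex n) (pathVertex (n + 1)) := by
  obtain ⟨k, i, hi, h₁, h₂⟩ := exists_pathVertex_eq_getD n
  rw [h₁, h₂]
  unfold IsPathEdge IsForwardEdge
  interval_cases i <;> simp

theorem IsPathEdge.ne {u v : ℤ} (h : IsPathEdge u v) : u ≠ v := by
  unfold IsPathEdge IsForwardEdge at h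
  omega

theorem IsPathEdge.eq_or_eq_or_eq {u v w x : ℤ} (hv : IsPathEdge u v) (hw : IsPathEdge u w)
    (hx : IsPathEdge u x) : v = w ∨ v = x ∨ w = x := by
  unfold IsPathEdge IsForwardEdge at *
  have : u % 8 = 0 ∨ u % 8 = 1 ∨ u % 8 = 2 ∨ u % 8 = 3 ∨ u % 8 = 4 ∨ u % 8 = 5 ∨
    u % 8 = 6 ∨ u % 8 = 7 := by omega
  rcases this with h | h | h | h | h | h | h | h <;> simp [h] at hv hw hx <;> omega

theorem map_hasse_pathEquiv_adj (u v : ℤ) :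
    ((hasse ℤ).map pathEquiv).Adj u v ↔ IsPathEdge u v := by
  simp only [map_adj', hasse_adj, Order.covBy_iff_add_one_eq, pathEquiv_apply]
  constructor
  · rintro ⟨-, a, b, rfl | rfl, rfl, rfl⟩
    · exact isPathEdge_pathVertex a
    · exact (isPathEdge_pathVertex b).symm
  · intro huv
    obtain ⟨n, rfl⟩ : ∃ n, pathVertex n = u := pathEquiv.surjective u
    have hsucc := isPathEdge_pathVertex n
    have hpred : IsPathEdge (pathVertex n) (pathVertex (n - 1)) := by
      simpa using (isPathEdge_pathVertex (n - 1)).symm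
    have hne : pathVertex (n + 1) ≠ pathVertex (n - 1) :=
      pathEquiv.injective.ne (show n + 1 ≠ n - 1 by omega)
    refine ⟨huv.ne, ?_⟩
    -- `pathVertex (n ± 1)` are two distinct solutions, and there are at most two.
    rcases huv.eq_or_eq_or_eq hsucc hpred with rfl | rfl | h
    · exact ⟨n, n + 1, Or.inl rfl, rfl, rfl⟩
    · exact ⟨n, n - 1, Or.inr (by omega), rfl, rfl⟩
    · exact absurd h hne

theorem shiftGraph_map_hasse_pathEquiv_le_cay (t : ℤ) :
    shiftGraph ((hasse ℤ).map pathEquiv) t ≤ cay {1, 2, 3, 4} := by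
  intro u v huv
  have h : IsPathEdge (u - t) (v - t) := (map_hasse_pathEquiv_adj _ _).mp huv
  unfold IsPathEdge IsForwardEdge at h
  simp only [cay, Set.mem_insert_iff, Set.mem_singleton_iff]
  omega

theorem eq_of_isPathEdge_sub_two_mul {u v : ℤ} {a b : ℕ} (ha : a < 4) (hb : b < 4)
    (hua : IsPathEdge (u - 2 * a) (v - 2 * a)) (hub : IsPathEdge (u - 2 * b) (v - 2 * b)) :
    a = b := by
  unfold IsPathEdge IsForwardEdge at hua hub
  omega

theorem exists_isForwardEdge_sub_two_mul (u d : ℤ) (hd₁ : 1 ≤ d) (hd₄ : d ≤ 4) :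
    ∃ a : Fin 4, IsForwardEdge (u - 2 * (a : ℕ)) (u + d - 2 * (a : ℕ)) := by
  obtain ⟨r, hr, hu⟩ : ∃ r : ℕ, r < 8 ∧ u % 8 = r := ⟨(u % 8).toNat, by omega, by omega⟩
  simp only [Fin.exists_fin_succ, IsForwardEdge, sub_sub_sub_cancel_right, add_sub_cancel_left,
    Int.sub_emod u, hu]
  interval_cases d <;> interval_cases r <;> decide

theorem exists_isPathEdge_sub_two_mul {u v : ℤ} (h : (cay {1, 2, 3, 4}).Adj u v) :
    ∃ a : Fin 4, IsPathEdge (u - 2 * (a : ℕ)) (v - 2 * (a : ℕ)) := by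
  simp only [cay, Set.mem_insert_iff, Set.mem_singleton_iff] at h
  rcases le_or_gt u v with huv | huv
  · obtain ⟨a, ha⟩ := exists_isForwardEdge_sub_two_mul u (v - u) (by omega) (by omega)
    exact ⟨a, Or.inl (by rwa [add_sub_cancel] at ha)⟩
  · obtain ⟨a, ha⟩ := exists_isForwardEdge_sub_two_mul v (u - v) (by omega) (by omega)
    exact ⟨a, Or.inr (by rwa [add_sub_cancel] at ha)⟩

theorem stmt17 :
    ∀ H1 : SimpleGraph ℤ,
      H1 = (⨆ i : ℤ, shiftGraph (listGraph [0, -1, 1, 5, 2, 3, 6, 4, 8]) (8 * i)) →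
      (∀ j : Fin 4, IsHamPath (cay ({1, 2, 3, 4} : Set ℤ)) (shiftGraph H1 (2 * ((j : ℕ) : ℤ)))) ∧
      (∀ j j' : Fin 4, j ≠ j' →
        Disjoint (shiftGraph H1 (2 * ((j : ℕ) : ℤ))).edgeSet
          (shiftGraph H1 (2 * ((j' : ℕ) : ℤ))).edgeSet) ∧
      (∀ e ∈ (cay ({1, 2, 3, 4} : Set ℤ)).edgeSet,
        ∃ j : Fin 4, e ∈ (shiftGraph H1 (2 * ((j : ℕ) : ℤ))).edgeSet) := by
  rintro _ rfl
  rw [iSup_shiftGraph_listGraph]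
  have hadj (t u v : ℤ) :
      (shiftGraph ((hasse ℤ).map pathEquiv) t).Adj u v ↔ IsPathEdge (u - t) (v - t) :=
    map_hasse_pathEquiv_adj _ _
  refine ⟨fun j => ?_, fun j j' hjj' => ?_, fun e he => ?_⟩
  · rw [shiftGraph_map]
    exact isHamPath_map_hasse _
      (shiftGraph_map _ _ _ ▸ shiftGraph_map_hasse_pathEquiv_le_cay _)
  · rw [Set.disjoint_left]
    rintro ⟨u, v⟩ hj hj'
    exact hjj' (Fin.ext (eq_of_isPathEdge_sub_two_mul j.isLt j'.isLt
      ((hadj _ u v).mp hj) ((hadj _ u v).mp hj')))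
  · induction e using Sym2.ind with
    | _ u v =>
      obtain ⟨j, hj⟩ := exists_isPathEdge_sub_two_mul he
      exact ⟨j, (hadj _ u v).mpr hj⟩
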